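/- The universal process dominates the price: for every stopping time τ ∈ T_{0,N} (in particular for every deterministic time t ∈ {0,...,N}), K_τ ≥ P_τ a.s. -/

import Mathlib

open MeasureTheory Filter

/-- Running maximum `max_{t ≤ v ≤ u} L v ω` (intended for `t ≤ u`). -/
noncomputable def runMax {Ω : Type*} (L : ℕ → Ω → ℝ) (t u : ℕ) (ω : Ω) : ℝ :=
  (Finset.Icc t u).fold max (L t ω) fun v => L v ω

/-- Running minimum `min_{t ≤ v ≤ u} K v ω` (intended for `t ≤ u`). -/
noncomputable def runMin {Ω : Type*} (K : ℕ → Ω → ℝ) (t u : ℕ) (ω : Ω) : ℝ :=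
  (Finset.Icc t u).fold min (K t ω) fun v => K v ω

/-- A discrete-time nonlinear expectation on the horizon `{0, ..., N}`:
a family of maps `E t` sending square-integrable `F N`-measurable random
variables to square-integrable `F t`-measurable random variables, satisfying
monotonicity, strict monotonicity, translation invariance, the tower property,
the zero-one law and monotone convergence. -/
structure NLExp {Ω : Type*} {m0 : MeasurableSpace Ω} (μ : Measure Ω)
    (F : Filtration ℕ m0) (N : ℕ) where
  E : ℕ → (Ω → ℝ) → Ω → ℝ
  adapted : ∀ t, t ≤ N → ∀ ξ : Ω → ℝ, StronglyMeasurable[F N] ξ → MemLp ξ 2 μ →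
    StronglyMeasurable[F t] (E t ξ)
  sqInt : ∀ t, t ≤ N → ∀ ξ : Ω → ℝ, StronglyMeasurable[F N] ξ → MemLp ξ 2 μ →
    MemLp (E t ξ) 2 μ
  mono : ∀ t, t ≤ N → ∀ ξ η : Ω → ℝ, StronglyMeasurable[F N] ξ → MemLp ξ 2 μ →
    StronglyMeasurable[F N] η → MemLp η 2 μ → ξ ≤ᵐ[μ] η → E t ξ ≤ᵐ[μ] E t η
  strictMono : ∀ t, t ≤ N → ∀ ξ η : Ω → ℝ, StronglyMeasurable[F N] ξ → MemLp ξ 2 μ →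
    StronglyMeasurable[F N] η → MemLp η 2 μ → ξ ≤ᵐ[μ] η →
    0 < μ {ω | ξ ω < η ω} → 0 < μ {ω | E t ξ ω < E t η ω}
  translation : ∀ t, t ≤ N → ∀ ξ ζ : Ω → ℝ, StronglyMeasurable[F N] ξ → MemLp ξ 2 μ →
    StronglyMeasurable[F t] ζ → MemLp ζ 2 μ → E t (ξ + ζ) =ᵐ[μ] E t ξ + ζ
  tower : ∀ s t, s ≤ t → t ≤ N → ∀ ξ : Ω → ℝ, StronglyMeasurable[F N] ξ → MemLp ξ 2 μ →
    E s (E t ξ) =ᵐ[μ] E s ξ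
  zeroOne : ∀ t, t ≤ N → ∀ ξ η : Ω → ℝ, StronglyMeasurable[F N] ξ → MemLp ξ 2 μ →
    StronglyMeasurable[F N] η → MemLp η 2 μ → ∀ A : Set Ω, MeasurableSet[F t] A →
    E t (A.indicator ξ + Aᶜ.indicator η) =ᵐ[μ]
      A.indicator (E t ξ) + Aᶜ.indicator (E t η)
  monoConv : ∀ t, t ≤ N → ∀ (ξs : ℕ → Ω → ℝ) (ξ : Ω → ℝ),
    (∀ n, StronglyMeasurable[F N] (ξs n)) → (∀ n, MemLp (ξs n) 2 μ) →
    StronglyMeasurable[F N] ξ → MemLp ξ 2 μ →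
    (∀ᵐ ω ∂μ, (Monotone fun n => ξs n ω) ∨ (Antitone fun n => ξs n ω)) →
    (∀ᵐ ω ∂μ, Tendsto (fun n => ξs n ω) atTop (nhds (ξ ω))) →
    ∀ᵐ ω ∂μ, Tendsto (fun n => E t (ξs n) ω) atTop (nhds (E t ξ ω))


/-! The payoff whose `E t`-value represents `-(1+r)⁻ᵗ S t` dominates `(1+r)⁻ᵗ (-K t)` pointwise:
each running maximum is at least its first term `-K t`, and the discount weights
`r/(1+r) (1+r)⁻ᵘ` (`t ≤ u < N`) together with `(1+r)⁻ᴺ` add up to `(1+r)⁻ᵗ`.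
As `E t` is monotone and fixes `F t`-measurable variables, `S t ≤ K t` a.s. at every
deterministic time, hence a.s. at all `t ≤ N` simultaneously, and so at any random time. -/

section runMax

variable {Ω : Type*} (L : ℕ → Ω → ℝ)

lemma runMax_self (t : ℕ) (ω : Ω) : runMax L t t ω = L t ω := by
  simp [runMax]

lemma runMax_succ {t u : ℕ} (h : t ≤ u) (ω : Ω) :
    runMax L t (u + 1) ω = max (L (u + 1) ω) (runMax L t u ω) := by
  rw [runMax, runMax, ← Finset.insert_Icc_right_eq_Icc_add_one (h.trans u.le_succ),
    Finset.fold_insert (by simp)]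

lemma le_runMax {t u : ℕ} (h : t ≤ u) (ω : Ω) : L t ω ≤ runMax L t u ω := by
  induction u, h using Nat.le_induction with
  | base => rw [runMax_self]
  | succ u hu ih => exact ih.trans ((runMax_succ L hu ω).symm ▸ le_max_right _ _)

lemma stronglyMeasurable_runMax {m : MeasurableSpace Ω} {t u : ℕ} (h : t ≤ u)
    (hL : ∀ v, t ≤ v → v ≤ u → StronglyMeasurable[m] (L v)) :
    StronglyMeasurable[m] (runMax L t u) := by
  induction u, h using Nat.le_induction with
  | base => exact (funext (runMax_self L t)).symm ▸ hL t le_rfl le_rfl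
  | succ u hu ih =>
    rw [show runMax L t (u + 1) = L (u + 1) ⊔ runMax L t u from funext (runMax_succ L hu)]
    exact (hL (u + 1) (hu.trans u.le_succ) le_rfl).sup
      (ih fun v hv hvu => hL v hv (hvu.trans u.le_succ))

lemma memLp_runMax {m : MeasurableSpace Ω} {μ : Measure Ω} {t u : ℕ} (h : t ≤ u)
    (hL : ∀ v, t ≤ v → v ≤ u → MemLp (L v) 2 μ) :
    MemLp (runMax L t u) 2 μ := by
  induction u, h using Nat.le_induction with
  | base => exact (funext (runMax_self L t)).symm ▸ hL t le_rfl le_rfl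
  | succ u hu ih =>
    rw [show runMax L t (u + 1) = L (u + 1) ⊔ runMax L t u from funext (runMax_succ L hu)]
    exact (hL (u + 1) (hu.trans u.le_succ) le_rfl).sup
      (ih fun v hv hvu => hL v hv (hvu.trans u.le_succ))

end runMax

lemma sum_Ico_discount_weights {r : ℝ} (hr : 1 + r ≠ 0) {t n : ℕ} (h : t ≤ n) :
    ∑ u ∈ Finset.Ico t n, r / (1 + r) * ((1 + r) ^ u)⁻¹ =
      ((1 + r) ^ t)⁻¹ - ((1 + r) ^ n)⁻¹ := by
  induction n, h using Nat.le_induction with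
  | base => simp
  | succ n hn ih =>
    rw [Finset.sum_Ico_succ_top hn, ih, pow_succ]
    field_simp
    ring

section discountedRunMax

variable {Ω : Type*} (r : ℝ) (L : ℕ → Ω → ℝ) (t N : ℕ)

noncomputable def discountedRunMax (ω : Ω) : ℝ :=
  (∑ u ∈ Finset.Ico t N, r / (1 + r) * ((1 + r) ^ u)⁻¹ * runMax L t u ω) +
    ((1 + r) ^ N)⁻¹ * runMax L t N ω

variable {r L t N}

lemma pow_inv_mul_le_discountedRunMax (hr : 0 ≤ r) (ht : t ≤ N) (ω : Ω) :
    ((1 + r) ^ t)⁻¹ * L t ω ≤ discountedRunMax r L t N ω := by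
  have hweights : ((1 + r) ^ t)⁻¹ * L t ω =
      (∑ u ∈ Finset.Ico t N, r / (1 + r) * ((1 + r) ^ u)⁻¹ * L t ω) +
        ((1 + r) ^ N)⁻¹ * L t ω := by
    rw [← Finset.sum_mul, sum_Ico_discount_weights (by positivity) ht]
    ring
  rw [hweights, discountedRunMax]
  gcongr with u hu
  · exact le_runMax L (Finset.mem_Ico.1 hu).1 ω
  · exact le_runMax L ht ω

lemma stronglyMeasurable_discountedRunMax {m : MeasurableSpace Ω} (ht : t ≤ N)
    (hL : ∀ v, t ≤ v → v ≤ N → StronglyMeasurable[m] (L v)) :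
    StronglyMeasurable[m] (discountedRunMax r L t N) := by
  refine .add (Finset.stronglyMeasurable_fun_sum _ fun u hu => ?_) (.const_mul ?_ _)
  · have hu := Finset.mem_Ico.1 hu
    exact (stronglyMeasurable_runMax L hu.1 fun v hv hvu => hL v hv (hvu.trans hu.2.le)).const_mul
      _
  · exact stronglyMeasurable_runMax L ht hL

lemma memLp_discountedRunMax {m : MeasurableSpace Ω} {μ : Measure Ω} (ht : t ≤ N)
    (hL : ∀ v, t ≤ v → v ≤ N → MemLp (L v) 2 μ) :
    MemLp (discountedRunMax r L t N) 2 μ := by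
  refine .add (memLp_finsetSum _ fun u hu => ?_) (.const_mul ?_ _)
  · have hu := Finset.mem_Ico.1 hu
    exact (memLp_runMax L hu.1 fun v hv hvu => hL v hv (hvu.trans hu.2.le)).const_mul _
  · exact memLp_runMax L ht hL

end discountedRunMax

namespace NLExp

variable {Ω : Type*} {m0 : MeasurableSpace Ω} {μ : Measure Ω} {F : Filtration ℕ m0} {N : ℕ}
  (EE : NLExp μ F N) {t : ℕ}

lemma E_zero (ht : t ≤ N) : EE.E t 0 =ᵐ[μ] 0 := by
  have h0 : StronglyMeasurable[F N] (0 : Ω → ℝ) := stronglyMeasurable_const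
  have htr := EE.translation t ht 0 (EE.E t 0) h0 .zero (EE.adapted t ht 0 h0 .zero)
    (EE.sqInt t ht 0 h0 .zero)
  have htow := EE.tower t t le_rfl ht 0 h0 .zero
  rw [zero_add] at htr
  filter_upwards [htr, htow] with ω h1 h2
  simp only [Pi.add_apply, Pi.zero_apply] at h1 h2 ⊢
  linarith

lemma E_of_stronglyMeasurable (ht : t ≤ N) {ζ : Ω → ℝ} (hζ : StronglyMeasurable[F t] ζ)
    (hζ2 : MemLp ζ 2 μ) : EE.E t ζ =ᵐ[μ] ζ := by
  have htr := EE.translation t ht 0 ζ stronglyMeasurable_const .zero hζ hζ2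
  rw [zero_add] at htr
  filter_upwards [htr, EE.E_zero ht] with ω h1 h2
  simp only [Pi.add_apply, Pi.zero_apply] at h1 h2
  rw [h1, h2, zero_add]

lemma le_E_of_le (ht : t ≤ N) {ζ ξ : Ω → ℝ} (hζ : StronglyMeasurable[F t] ζ)
    (hζ2 : MemLp ζ 2 μ) (hξ : StronglyMeasurable[F N] ξ) (hξ2 : MemLp ξ 2 μ)
    (hle : ζ ≤ᵐ[μ] ξ) : ζ ≤ᵐ[μ] EE.E t ξ := by
  filter_upwards [EE.E_of_stronglyMeasurable ht hζ hζ2,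
    EE.mono t ht ζ ξ (hζ.mono (F.mono ht)) hζ2 hξ hξ2 hle] with ω h1 h2
  exact h1 ▸ h2

end NLExp

lemma price_le_of_eq_E_discountedRunMax {Ω : Type*} {m0 : MeasurableSpace Ω} {μ : Measure Ω}
    {F : Filtration ℕ m0} {N : ℕ} (EE : NLExp μ F N) {r : ℝ} (hr : 0 ≤ r)
    {S K : ℕ → Ω → ℝ} (hK_adapted : ∀ t, t ≤ N → StronglyMeasurable[F t] (K t))
    (hK_sqInt : ∀ t, t ≤ N → MemLp (K t) 2 μ) {t : ℕ} (ht : t ≤ N)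
    (hK_rep : (fun ω => -(((1 + r) ^ t)⁻¹ * S t ω)) =ᵐ[μ]
      EE.E t (discountedRunMax r (fun v ω => -K v ω) t N)) :
    ∀ᵐ ω ∂μ, S t ω ≤ K t ω := by
  have hle := EE.le_E_of_le ht (((hK_adapted t ht).neg).const_mul ((1 + r) ^ t)⁻¹)
    ((hK_sqInt t ht).neg.const_mul _)
    (stronglyMeasurable_discountedRunMax ht fun v _ hv =>
      ((hK_adapted v hv).mono (F.mono hv)).neg)
    (memLp_discountedRunMax ht fun v _ hv => (hK_sqInt v hv).neg)
    (.of_forall (pow_inv_mul_le_discountedRunMax (L := fun v ω => -K v ω) hr ht))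
  filter_upwards [hle, hK_rep] with ω hle hrep
  have h3 : ((1 + r) ^ t)⁻¹ * S t ω ≤ ((1 + r) ^ t)⁻¹ * K t ω := by
    have := hle.trans_eq hrep.symm
    simp only [Pi.neg_apply] at this
    linarith
  exact le_of_mul_le_mul_left h3 (by positivity)

theorem universal_process_dominates_price_general
{Ω : Type*}
    [m0 : MeasurableSpace Ω]
    (μ : Measure Ω)
    (F : Filtration ℕ m0) (N : ℕ)
    (EE : NLExp μ F N)
    (r : ℝ) (hr : 0 < r)
    (S : ℕ → Ω → ℝ)
(K : ℕ → Ω → ℝ)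
    (hK_adapted : ∀ t, t ≤ N → StronglyMeasurable[F t] (K t))
    (hK_sqInt : ∀ t, t ≤ N → MemLp (K t) 2 μ)
    (hK_rep : ∀ t, t ≤ N →
      (fun ω => -(((1 + r) ^ t)⁻¹ * S t ω)) =ᵐ[μ] EE.E t fun ω =>
        (∑ u ∈ Finset.Ico t N,
          r / (1 + r) * ((1 + r) ^ u)⁻¹ * runMax (fun v ω' => -K v ω') t u ω)
        + ((1 + r) ^ N)⁻¹ * runMax (fun v ω' => -K v ω') t N ω) :
    ∀ τ : Ω → ℕ, IsStoppingTime F (fun ω => (τ ω : WithTop ℕ)) → (∀ ω, τ ω ≤ N) →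
      ∀ᵐ ω ∂μ, S (τ ω) ω ≤ K (τ ω) ω := by
  intro τ _ hτN
  have hall : ∀ᵐ ω ∂μ, ∀ t ∈ Finset.Iic N, S t ω ≤ K t ω :=
    (eventually_all_finset _).2 fun t ht =>
      price_le_of_eq_E_discountedRunMax EE hr.le hK_adapted hK_sqInt (Finset.mem_Iic.1 ht)
        (hK_rep t (Finset.mem_Iic.1 ht))
  filter_upwards [hall] with ω h
  exact h (τ ω) (Finset.mem_Iic.2 (hτN ω))

/-- **The universal process dominates the price.** For every stopping time
`τ ∈ T_{0,N}` (in particular every deterministic time), `K_τ ≥ P_τ` a.s. -/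
theorem universal_process_dominates_price
{Ω : Type*} [TopologicalSpace Ω] [PolishSpace Ω]
    [m0 : MeasurableSpace Ω] [BorelSpace Ω]
    (μ : Measure Ω) [IsProbabilityMeasure μ]
    (F : Filtration ℕ m0) (N : ℕ) (hN : 1 ≤ N)
    (EE : NLExp μ F N)
    (r : ℝ) (hr : 0 < r)
    (S : ℕ → Ω → ℝ)
    (hS_adapted : ∀ t, t ≤ N → StronglyMeasurable[F t] (S t))
    (hS_sqInt : ∀ t, t ≤ N → MemLp (fun ω => ((1 + r) ^ t)⁻¹ * S t ω) 2 μ)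
(K : ℕ → Ω → ℝ)
    (hK_adapted : ∀ t, t ≤ N → StronglyMeasurable[F t] (K t))
    (hK_sqInt : ∀ t, t ≤ N → MemLp (K t) 2 μ)
    (hK_rep : ∀ t, t ≤ N →
      (fun ω => -(((1 + r) ^ t)⁻¹ * S t ω)) =ᵐ[μ] EE.E t fun ω =>
        (∑ u ∈ Finset.Ico t N,
          r / (1 + r) * ((1 + r) ^ u)⁻¹ * runMax (fun v ω' => -K v ω') t u ω)
        + ((1 + r) ^ N)⁻¹ * runMax (fun v ω' => -K v ω') t N ω) :
    ∀ τ : Ω → ℕ, IsStoppingTime F (fun ω => (τ ω : WithTop ℕ)) → (∀ ω, τ ω ≤ N) →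
      ∀ᵐ ω ∂μ, S (τ ω) ω ≤ K (τ ω) ω :=
  universal_process_dominates_price_general (m0 := m0) μ F N EE r hr S K hK_adapted hK_sqInt hK_rep
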